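/- Let m be even, n ∈ ℕ, and s ≥ 1 an integer. Then there exists a constant c > 0 (depending only on m, n, s) such that for any x^1, ..., x^s ∈ ℝ^n, c · ‖Σ_{j=1}^s (x^j)^{*m}‖ ≥ max_{1≤j≤s} ‖x^j‖^m. -/

import Mathlib

/-- The `m`-fold self-convolution of `x ∈ ℝ^n`. -/
noncomputable def convPow (n m : ℕ) (x : Fin n → ℝ) : Fin ((n - 1) * m + 1) → ℝ :=
  fun i => ∑ f : Fin m → Fin n, if (∑ j, (f j : ℕ)) = (i : ℕ) then ∏ j, x (f j) else 0

/-- The Euclidean norm on `ℝ^N`. -/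
noncomputable def enorm {N : ℕ} (z : Fin N → ℝ) : ℝ := Real.sqrt (∑ i, z i ^ 2)

/-!
The map `(x^j)_j ↦ ∑_j (x^j)^{*m}` is continuous and homogeneous of degree `m`, so by compactness
of the unit sphere it suffices that it vanishes only at `0`. Pairing with `(1, t, …, t^{(n-1)m})`
turns `(x^j)^{*m}` into `p_j(t)^m`, where `p_j(t) = ∑_k x^j_k t^k`; for even `m` a vanishing sum
of these forces every polynomial `p_j` to vanish identically, hence every `x^j = 0`.
-/

open Finset

theorem exists_pow_norm_le_mul_norm_of_homogeneous {E G : Type*} [NormedAddCommGroup E]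
    [NormedSpace ℝ E] [FiniteDimensional ℝ E] [NormedAddCommGroup G] [NormedSpace ℝ G]
    {F : E → G} {m : ℕ} (hm : m ≠ 0) (hF : Continuous F)
    (hF_smul : ∀ r : ℝ, 0 ≤ r → ∀ x, F (r • x) = r ^ m • F x)
    (hF_eq_zero : ∀ x, F x = 0 → x = 0) :
    ∃ c > 0, ∀ x, ‖x‖ ^ m ≤ c * ‖F x‖ := by
  obtain ⟨δ, hδ, hδF⟩ := (isCompact_sphere (0 : E) 1).exists_forall_le' hF.norm.continuousOn
    (a := 0) fun u hu => norm_pos_iff.2 fun h => by simp [hF_eq_zero u h] at hu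
  refine ⟨δ⁻¹, inv_pos.2 hδ, fun x => ?_⟩
  rcases eq_or_ne x 0 with rfl | hx
  · simp only [norm_zero, zero_pow hm]
    positivity
  have hx' : ‖x‖ ≠ 0 := norm_ne_zero_iff.2 hx
  have hFx : F x = ‖x‖ ^ m • F (‖x‖⁻¹ • x) := by
    rw [← hF_smul _ (norm_nonneg x), smul_smul, mul_inv_cancel₀ hx', one_smul]
  rw [le_inv_mul_iff₀ hδ, hFx, norm_smul, norm_pow, norm_norm, mul_comm]
  gcongr
  exact hδF _ (by simp [norm_smul, hx])

theorem eq_zero_of_forall_sum_mul_pow_eq_zero {R : Type*} [CommRing R] [IsDomain R] [Infinite R]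
    {n : ℕ} (a : Fin n → R) (h : ∀ t : R, ∑ k, a k * t ^ (k : ℕ) = 0) : a = 0 := by
  set p : Polynomial R := ∑ k : Fin n, Polynomial.C (a k) * Polynomial.X ^ (k : ℕ)
  have hp : p = 0 := Polynomial.funext fun t => by simpa [p, Polynomial.eval_finsetSum] using h t
  funext k
  have hcoeff : p.coeff k = a k := by
    simp [p, Polynomial.coeff_C_mul, Polynomial.coeff_X_pow, Fin.val_eq_val]
  simpa [hp] using hcoeff.symm

@[fun_prop]
lemma continuous_convPow (n m : ℕ) : Continuous (convPow n m) :=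
  continuous_pi fun _ => continuous_finsetSum _ fun _ _ => by split_ifs <;> fun_prop

lemma convPow_smul (n m : ℕ) (r : ℝ) (x : Fin n → ℝ) :
    convPow n m (r • x) = r ^ m • convPow n m x := by
  funext i
  simp [convPow, mul_sum, prod_mul_distrib]

lemma convPow_zero (n : ℕ) (x : Fin n → ℝ) : convPow n 0 x = 1 := by
  funext i
  simp [convPow, Fin.fin_one_eq_zero i]

lemma sum_val_lt_sub_one_mul_add_one {n m : ℕ} (f : Fin m → Fin n) :
    ∑ j, (f j : ℕ) < (n - 1) * m + 1 := by
  have : ∑ j, (f j : ℕ) ≤ ∑ _j : Fin m, (n - 1) :=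
    sum_le_sum fun j _ => Nat.le_pred_of_lt (f j).isLt
  simp only [sum_const, card_univ, Fintype.card_fin, smul_eq_mul] at this
  lia

lemma sum_convPow_mul_pow (n m : ℕ) (x : Fin n → ℝ) (t : ℝ) :
    ∑ i, convPow n m x i * t ^ (i : ℕ) = (∑ k, x k * t ^ (k : ℕ)) ^ m := by
  rw [← Fin.prod_const, Fintype.prod_sum]
  simp only [convPow, sum_mul, ite_mul, zero_mul]
  rw [sum_comm]
  refine sum_congr rfl fun f _ => ?_
  rw [prod_mul_distrib, prod_pow_eq_pow_sum,
    sum_eq_single ⟨_, sum_val_lt_sub_one_mul_add_one f⟩]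
  · simp
  · intro i _ hi
    rw [if_neg fun h => hi (Fin.ext h.symm)]
  · simp

lemma eq_zero_of_sum_convPow_eq_zero {n m s : ℕ} (hm : Even m) {x : Fin s → Fin n → ℝ}
    (h : ∑ j, convPow n m (x j) = 0) (j : Fin s) : x j = 0 := by
  refine eq_zero_of_forall_sum_mul_pow_eq_zero _ fun t => ?_
  have hsum : ∑ j, (∑ k, x j k * t ^ (k : ℕ)) ^ m = 0 := by
    simp_rw [← sum_convPow_mul_pow]
    rw [sum_comm]
    simp [← sum_mul, ← Finset.sum_apply, h]
  exact eq_zero_of_pow_eq_zero <|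
    (sum_eq_zero_iff_of_nonneg fun j _ => hm.pow_nonneg _).1 hsum j (mem_univ j)

lemma enorm_eq_norm_toLp {N : ℕ} (z : Fin N → ℝ) :
    _root_.enorm z = ‖(WithLp.toLp 2 z : EuclideanSpace ℝ (Fin N))‖ := by
  simp [_root_.enorm, EuclideanSpace.norm_eq]

theorem convPow_sum_coercive_many_general (n m s : ℕ) (hm : Even m) :
    ∃ c : ℝ, 0 < c ∧ ∀ x : Fin s → (Fin n → ℝ), ∀ j : Fin s,
      _root_.enorm (x j) ^ m ≤ c * _root_.enorm (∑ j', convPow n m (x j')) := by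
  rcases eq_or_ne m 0 with rfl | hm0
  · exact ⟨1, one_pos, fun x j => by
      simpa [convPow_zero, _root_.enorm] using Nat.succ_le_of_lt j.pos⟩
  -- `Fin s → EuclideanSpace` carries the maximum of the Euclidean norms, so `‖X j‖ ≤ ‖X‖`.
  let F : (Fin s → EuclideanSpace ℝ (Fin n)) → EuclideanSpace ℝ (Fin ((n - 1) * m + 1)) :=
    fun X => WithLp.toLp 2 (∑ j, convPow n m (X j))
  obtain ⟨c, hc, hcF⟩ := exists_pow_norm_le_mul_norm_of_homogeneous (F := F) hm0
    (by unfold F; fun_prop) (fun r _ X => by simp [F, convPow_smul, smul_sum])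
    fun X hX => funext fun j => by
      simpa using eq_zero_of_sum_convPow_eq_zero hm (x := fun j => X j)
        (by simpa [F] using congrArg WithLp.ofLp hX) j
  refine ⟨c, hc, fun x j => ?_⟩
  let X : Fin s → EuclideanSpace ℝ (Fin n) := fun j => WithLp.toLp 2 (x j)
  rw [enorm_eq_norm_toLp, enorm_eq_norm_toLp]
  calc ‖X j‖ ^ m ≤ ‖X‖ ^ m := by gcongr; exact norm_le_pi_norm X j
    _ ≤ c * ‖F X‖ := hcF X

/-- For even `m` and `s ≥ 1` there is `c > 0` (depending only on `m, n, s`) such that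
`c ⬝ ‖∑_j (x^j)^{*m}‖ ≥ max_j ‖x^j‖^m` for all `x^1, …, x^s ∈ ℝ^n`. -/
theorem convPow_sum_coercive_many (n m s : ℕ) (hm : Even m) (hs : 1 ≤ s) :
    ∃ c : ℝ, 0 < c ∧ ∀ x : Fin s → (Fin n → ℝ), ∀ j : Fin s,
      _root_.enorm (x j) ^ m ≤ c * _root_.enorm (∑ j', convPow n m (x j')) :=
  convPow_sum_coercive_many_general n m s hm
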